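/- Let A be a commutative ring, and let f, g₁, …, g_m ∈ A be non-zero-divisors such that each g_i either divides f or is divisible by f. Let M• be a cochain complex of A-modules on each term of which multiplication by f is injective. If some g_i divides f, then the complex η_f(M• ⊗_A Kos_A(g₁, …, g_m)) is acyclic (all its cohomology modules vanish). -/
import Mathlib


/-!
Décalage and Koszul complexes, after Bhatt–Morrow–Scholze (Lemma 7.9 (i)).

A cochain complex of `A`-modules is presented as an `A`-module `M` together with a
differential `d : M →ₗ[A] M` with `d ∘ d = 0` and an internal grading
`G : ℤ → Submodule A M` (so `Mⁱ = G i`) with `d (G i) ⊆ G (i+1)`.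

The tensor product `M• ⊗_A Kos_A(g₁, …, g_m)` with the Koszul complex (the tensor product of
the two-term complexes `A →^{gᵢ} A` in cohomological degrees 0 and 1) is presented as the
module `Finset (Fin m) → M` (functions `S ↦ ξ_S`, recording the coefficient of the basis
vector `e_S` of the Koszul complex), with degree-`n` graded piece
`{ ξ | ξ_S ∈ M^{n - |S|} }` and total (Koszul-sign) differential
`(Dξ)_S = (-1)^{|S|}·d(ξ_S) + ∑_{i ∈ S} (-1)^{#{j ∈ S : j < i}} gᵢ·ξ_{S \ {i}}`.
-/

universe u

open LocalizedModule

section Decalage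

variable {A : Type u} [CommRing A]

/-- The image of `f` in the localization `A[1/f]`, as a unit. -/
noncomputable def fUnit (f : A) : (Localization (Submonoid.powers f))ˣ :=
  (IsLocalization.map_units (Localization (Submonoid.powers f))
    (⟨f, Submonoid.mem_powers f⟩ : Submonoid.powers f)).unit

variable (f : A) {M : Type u} [AddCommGroup M] [Module A M]

/-- Multiplication by `f ^ j` (for `j : ℤ`) on `M[1/f]`, as an `A`-linear map. -/
noncomputable def fzpow (j : ℤ) :
    LocalizedModule (Submonoid.powers f) M →ₗ[A] LocalizedModule (Submonoid.powers f) M where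
  toFun α := ((fUnit f ^ j : (Localization (Submonoid.powers f))ˣ) :
      Localization (Submonoid.powers f)) • α
  map_add' a b := smul_add _ a b
  map_smul' a α := by
    simp only [RingHom.id_apply]
    rw [← algebraMap_smul (Localization (Submonoid.powers f)) a α,
      ← algebraMap_smul (Localization (Submonoid.powers f)) a
        (((fUnit f ^ j : (Localization (Submonoid.powers f))ˣ) :
          Localization (Submonoid.powers f)) • α),
      smul_smul, smul_smul, mul_comm]

/-- The localization `d[1/f] : M[1/f] → M[1/f]` of the differential `d`. -/
noncomputable def locDiff (d : M →ₗ[A] M) :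
    LocalizedModule (Submonoid.powers f) M →ₗ[A] LocalizedModule (Submonoid.powers f) M :=
  IsLocalizedModule.map (Submonoid.powers f)
    (mkLinearMap (Submonoid.powers f) M) (mkLinearMap (Submonoid.powers f) M) d

variable (d : M →ₗ[A] M) (G : ℤ → Submodule A M)

/-- The degree-`n` term `η_f(M)ⁿ = { α ∈ fⁿ·Mⁿ : dα ∈ f^{n+1}·M^{n+1} }` of the décalage
complex, as a submodule of `M[1/f]`; here `Mⁿ = G n` is the degree-`n` graded piece. -/
noncomputable def etaDeg (n : ℤ) :
    Submodule A (LocalizedModule (Submonoid.powers f) M) :=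
  (G n).map ((fzpow f n).comp (mkLinearMap (Submonoid.powers f) M)) ⊓
    ((G (n + 1)).map ((fzpow f (n + 1)).comp (mkLinearMap (Submonoid.powers f) M))).comap
      (locDiff f d)

/-- Cocycles of `η_f(M)` in degree `n`. -/
noncomputable def etaCocycles (n : ℤ) :
    Submodule A (LocalizedModule (Submonoid.powers f) M) :=
  etaDeg f d G n ⊓ LinearMap.ker (locDiff f d)

end Decalage

section Koszul

variable {A : Type u} [CommRing A] {M : Type u} [AddCommGroup M] [Module A M] {m : ℕ}

/-- The total differential of `M• ⊗_A Kos_A(g₁, …, g_m)`, on the module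
`Finset (Fin m) → M` of coefficients of the Koszul basis vectors `e_S`:
`(Dξ)_S = (-1)^{|S|}·d(ξ_S) + ∑_{i ∈ S} (-1)^{#{j ∈ S : j < i}}·gᵢ·ξ_{S \ {i}}`. -/
noncomputable def koszulD (d : M →ₗ[A] M) (g : Fin m → A) :
    (Finset (Fin m) → M) →ₗ[A] (Finset (Fin m) → M) where
  toFun ξ S := ((-1 : A) ^ S.card) • d (ξ S) +
    ∑ i ∈ S, (((-1 : A) ^ (S.filter fun j => j < i).card) * g i) • ξ (S.erase i)
  map_add' ξ ζ := by
    funext S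
    simp only [Pi.add_apply, map_add, smul_add, Finset.sum_add_distrib]
    abel
  map_smul' a ξ := by
    funext S
    simp only [Pi.smul_apply, map_smul, RingHom.id_apply, smul_add, Finset.smul_sum,
      smul_comm a]

/-- The degree-`n` graded piece of `M• ⊗_A Kos_A(g₁, …, g_m)`:
those `ξ` with `ξ_S ∈ M^{n - |S|}` for all `S`. -/
def koszulGrading (G : ℤ → Submodule A M) (n : ℤ) : Submodule A (Finset (Fin m) → M) where
  carrier := {ξ | ∀ S : Finset (Fin m), ξ S ∈ G (n - S.card)}
  add_mem' := fun ha hb S => (G _).add_mem (ha S) (hb S)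
  zero_mem' := fun S => (G _).zero_mem
  smul_mem' := fun a ξ hξ S => (G _).smul_mem a (hξ S)

end Koszul

section Helpers

variable {A : Type u} [CommRing A] {M : Type u} [AddCommGroup M] [Module A M] {m : ℕ}

lemma locDiff_mk (f : A) (d : M →ₗ[A] M) (x : M) (s : Submonoid.powers f) :
    locDiff f d (LocalizedModule.mk x s) = LocalizedModule.mk (d x) s :=
  IsLocalizedModule.map_LocalizedModules _ d x s

lemma locDiff_loc_smul (f : A) (d : M →ₗ[A] M) (c : Localization (Submonoid.powers f))
    (α : LocalizedModule (Submonoid.powers f) M) :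
    locDiff f d (c • α) = c • locDiff f d α := by
  induction α using LocalizedModule.induction_on with
  | _ x s =>
    induction c using Localization.induction_on with
    | _ p =>
      rw [LocalizedModule.mk_smul_mk, locDiff_mk, locDiff_mk, LocalizedModule.mk_smul_mk,
        map_smul]

lemma pow_smul_eq_zero (f : A) (htf : ∀ x : M, f • x = 0 → x = 0) :
    ∀ (k : ℕ) (x : M), (f ^ k) • x = 0 → x = 0 := by
  intro k
  induction k with
  | zero => intro x hx; simpa using hx
  | succ k ih =>
    intro x hx
    rw [pow_succ, mul_smul] at hx
    exact htf x (ih _ hx)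

lemma mk_eq_zero_tf (f : A) (htf : ∀ x : M, f • x = 0 → x = 0) (x : M)
    (hx : LocalizedModule.mk x (1 : Submonoid.powers f) = 0) : x = 0 := by
  rw [← LocalizedModule.zero_mk (1 : Submonoid.powers f), LocalizedModule.mk_eq] at hx
  obtain ⟨u, hu⟩ := hx
  obtain ⟨k, hk⟩ := u.2
  simp only [one_smul, smul_zero] at hu
  rw [Submonoid.smul_def, ← hk] at hu
  exact pow_smul_eq_zero f htf k x hu

/-- The contracting homotopy for `M• ⊗ Kos` associated to an index `i₀` and `h` with
`f = g i₀ * h`. -/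
noncomputable def homot (h : A) (i₀ : Fin m) (ξ : Finset (Fin m) → M) :
    Finset (Fin m) → M := fun S =>
  if i₀ ∈ S then 0
  else (((-1 : A) ^ (S.filter fun j => j < i₀).card) * h) • ξ (insert i₀ S)

lemma homot_zero (h : A) (i₀ : Fin m) : homot h i₀ (0 : Finset (Fin m) → M) = 0 := by
  funext S
  simp [homot]

lemma homot_spec (d : M →ₗ[A] M) (g : Fin m → A) (h : A) (i₀ : Fin m)
    (ξ : Finset (Fin m) → M) :
    koszulD d g (homot h i₀ ξ) + homot h i₀ (koszulD d g ξ) = (g i₀ * h) • ξ := by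
  funext S
  simp only [koszulD, homot, LinearMap.coe_mk, AddHom.coe_mk, Pi.add_apply, Pi.smul_apply]
  by_cases hi : i₀ ∈ S
  · rw [if_pos hi, if_pos hi, map_zero, smul_zero, zero_add, add_zero]
    rw [Finset.sum_eq_single_of_mem i₀ hi (fun i hiS hne => by
      rw [if_pos (Finset.mem_erase.mpr ⟨(Ne.symm hne), hi⟩), smul_zero])]
    rw [if_neg (Finset.notMem_erase i₀ S), Finset.insert_erase hi, smul_smul]
    have hfe : ((S.erase i₀).filter fun j => j < i₀) = S.filter fun j => j < i₀ := by
      rw [Finset.filter_erase, Finset.erase_eq_of_notMem]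
      simp
    rw [hfe]
    have hs : (-1 : A) ^ (S.filter fun j => j < i₀).card *
        (-1 : A) ^ (S.filter fun j => j < i₀).card = 1 := by
      rw [← mul_pow]; norm_num
    rw [show (-1 : A) ^ (S.filter fun j => j < i₀).card * g i₀ *
        ((-1 : A) ^ (S.filter fun j => j < i₀).card * h) =
        ((-1 : A) ^ (S.filter fun j => j < i₀).card *
          (-1 : A) ^ (S.filter fun j => j < i₀).card) * (g i₀ * h) from by ring, hs, one_mul]
  · rw [if_neg hi, if_neg hi]
    -- expand D ξ at insert i₀ S
    rw [Finset.sum_insert hi, Finset.erase_insert hi]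
    have hcard : (insert i₀ S).card = S.card + 1 := Finset.card_insert_of_notMem hi
    have hfilt : ((insert i₀ S).filter fun j => j < i₀) = S.filter fun j => j < i₀ := by
      rw [Finset.filter_insert, if_neg (lt_irrefl i₀)]
    set k := (S.filter fun j => j < i₀).card with hk
    -- the main term producing (g i₀ * h) • ξ S
    have hmain : (((-1 : A) ^ k * h) •
        (((-1 : A) ^ (((insert i₀ S).filter fun j => j < i₀)).card * g i₀) • ξ S))
        = (g i₀ * h) • ξ S := by
      rw [hfilt, ← hk, smul_smul]
      have hs : (-1 : A) ^ k * (-1 : A) ^ k = 1 := by rw [← mul_pow]; norm_num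
      rw [show (-1 : A) ^ k * h * ((-1 : A) ^ k * g i₀) =
        ((-1 : A) ^ k * (-1 : A) ^ k) * (g i₀ * h) from by ring, hs, one_mul]
    -- cancellation of d-terms
    have hd : ((-1 : A) ^ S.card) • d ((((-1 : A) ^ k) * h) • ξ (insert i₀ S)) +
        (((-1 : A) ^ k) * h) • (((-1 : A) ^ (insert i₀ S).card) • d (ξ (insert i₀ S))) = 0 := by
      rw [map_smul, smul_smul, smul_smul, hcard, ← add_smul]
      have : (-1 : A) ^ S.card * ((-1 : A) ^ k * h) +
          (-1 : A) ^ k * h * (-1 : A) ^ (S.card + 1) = 0 := by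
        rw [pow_succ]; ring
      rw [this, zero_smul]
    -- cancellation of the Koszul sums
    have hsum : (∑ i ∈ S, (((-1 : A) ^ ((S.filter fun j => j < i)).card) * g i) •
          (if i₀ ∈ S.erase i then 0
            else (((-1 : A) ^ (((S.erase i).filter fun j => j < i₀)).card) * h) •
              ξ (insert i₀ (S.erase i)))) +
        (((-1 : A) ^ k) * h) • (∑ i ∈ S,
          (((-1 : A) ^ (((insert i₀ S).filter fun j => j < i)).card) * g i) •
            ξ ((insert i₀ S).erase i)) = 0 := by
      rw [Finset.smul_sum, ← Finset.sum_add_distrib]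
      refine Finset.sum_eq_zero fun i hiS => ?_
      have hne : i ≠ i₀ := fun e => hi (e ▸ hiS)
      have hnotmem : i₀ ∉ S.erase i := fun hmem => hi (Finset.mem_of_mem_erase hmem)
      rw [if_neg hnotmem]
      have hIe : (insert i₀ S).erase i = insert i₀ (S.erase i) :=
        Finset.erase_insert_of_ne (Ne.symm hne)
      rw [hIe, smul_smul, smul_smul, ← add_smul]
      have hsign : (-1 : A) ^ ((S.filter fun j => j < i)).card * g i *
            ((-1 : A) ^ (((S.erase i).filter fun j => j < i₀)).card * h) +
          (-1 : A) ^ k * h *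
            ((-1 : A) ^ (((insert i₀ S).filter fun j => j < i)).card * g i) = 0 := by
        rcases lt_or_gt_of_ne hne with hlt | hgt
        · -- i < i₀
          have h1 : ((insert i₀ S).filter fun j => j < i) = S.filter fun j => j < i := by
            rw [Finset.filter_insert, if_neg (by exact fun h' => absurd (h'.trans hlt) (lt_irrefl i₀))]
          have h2 : k = (((S.erase i).filter fun j => j < i₀)).card + 1 := by
            rw [hk, Finset.filter_erase]
            exact (Finset.card_erase_add_one
              (Finset.mem_filter.mpr ⟨hiS, hlt⟩ : i ∈ S.filter fun j => j < i₀)).symm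
          rw [h1, h2, pow_succ]; ring
        · -- i₀ < i
          have h1 : ((insert i₀ S).filter fun j => j < i) =
              insert i₀ (S.filter fun j => j < i) := by
            rw [Finset.filter_insert, if_pos hgt]
          have h1c : (((insert i₀ S).filter fun j => j < i)).card =
              ((S.filter fun j => j < i)).card + 1 := by
            rw [h1]
            exact Finset.card_insert_of_notMem fun hmem =>
              hi (Finset.mem_of_mem_filter i₀ hmem)
          have h2 : ((S.erase i).filter fun j => j < i₀) = S.filter fun j => j < i₀ := by
            rw [Finset.filter_erase, Finset.erase_eq_of_notMem]
            exact fun hmem => absurd ((Finset.mem_filter.mp hmem).2) (not_lt.mpr hgt.le)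
          rw [h1c, h2, pow_succ]; ring
      rw [hsign, zero_smul]
    -- assemble
    calc ((-1 : A) ^ S.card) • d ((((-1 : A) ^ k) * h) • ξ (insert i₀ S)) +
          (∑ i ∈ S, (((-1 : A) ^ ((S.filter fun j => j < i)).card) * g i) •
            (if i₀ ∈ S.erase i then 0
              else (((-1 : A) ^ (((S.erase i).filter fun j => j < i₀)).card) * h) •
                ξ (insert i₀ (S.erase i)))) +
          (((-1 : A) ^ k) * h) •
            (((-1 : A) ^ (insert i₀ S).card) • d (ξ (insert i₀ S)) +
              ((((-1 : A) ^ (((insert i₀ S).filter fun j => j < i₀)).card) * g i₀) • ξ S +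
                ∑ i ∈ S, (((-1 : A) ^ (((insert i₀ S).filter fun j => j < i)).card) * g i) •
                  ξ ((insert i₀ S).erase i)))
        = (((-1 : A) ^ S.card) • d ((((-1 : A) ^ k) * h) • ξ (insert i₀ S)) +
            (((-1 : A) ^ k) * h) • (((-1 : A) ^ (insert i₀ S).card) • d (ξ (insert i₀ S)))) +
          ((∑ i ∈ S, (((-1 : A) ^ ((S.filter fun j => j < i)).card) * g i) •
            (if i₀ ∈ S.erase i then 0
              else (((-1 : A) ^ (((S.erase i).filter fun j => j < i₀)).card) * h) •
                ξ (insert i₀ (S.erase i)))) +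
            (((-1 : A) ^ k) * h) • (∑ i ∈ S,
              (((-1 : A) ^ (((insert i₀ S).filter fun j => j < i)).card) * g i) •
                ξ ((insert i₀ S).erase i))) +
          (((-1 : A) ^ k) * h) •
            ((((-1 : A) ^ (((insert i₀ S).filter fun j => j < i₀)).card) * g i₀) • ξ S) := by
          simp only [smul_add]; abel
      _ = (g i₀ * h) • ξ S := by rw [hd, hsum, hmain, zero_add, zero_add]

lemma homot_grading (G : ℤ → Submodule A M) (n : ℤ) (h : A) (i₀ : Fin m)
    (ξ : Finset (Fin m) → M) (hξ : ξ ∈ koszulGrading G n) :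
    homot h i₀ ξ ∈ koszulGrading (M := M) G (n - 1) := by
  intro S
  by_cases hi : i₀ ∈ S
  · rw [homot, if_pos hi]; exact (G _).zero_mem
  · rw [homot, if_neg hi]
    have hc : n - 1 - (S.card : ℤ) = n - ((insert i₀ S).card : ℤ) := by
      rw [Finset.card_insert_of_notMem hi]; push_cast; ring
    rw [hc]
    exact (G _).smul_mem _ (hξ (insert i₀ S))

end Helpers

/-- **Bhatt–Morrow–Scholze, Lemma 7.9 (i).** Let `A` be a commutative ring and let
`f, g₁, …, g_m ∈ A` be non-zero-divisors such that each `gᵢ` divides `f` or is divisible by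
`f`, and such that some `gᵢ` divides `f`. Let `M•` be an `f`-torsion-free cochain complex of
`A`-modules (presented as a graded module `(M, G)` with differential `d`). Then
`η_f(M• ⊗_A Kos_A(g₁, …, g_m))` is acyclic: in every degree `n`, every `η`-cocycle is the
differential of an element of `η_f(M• ⊗ Kos)^{n-1}`. -/
theorem eta_koszul_acyclic
    {A : Type u} [CommRing A] (f : A) (hf : ∀ a : A, f * a = 0 → a = 0)
    {m : ℕ} (g : Fin m → A) (hg : ∀ i : Fin m, ∀ a : A, g i * a = 0 → a = 0)
    (hdvd : ∀ i : Fin m, g i ∣ f ∨ f ∣ g i) (hsome : ∃ i : Fin m, g i ∣ f)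
    {M : Type u} [AddCommGroup M] [Module A M]
    (d : M →ₗ[A] M) (G : ℤ → Submodule A M)
    (hG : DirectSum.IsInternal G)
    (hdG : ∀ n : ℤ, (G n).map d ≤ G (n + 1))
    (hdd : d.comp d = 0)
    (htf : ∀ x : M, f • x = 0 → x = 0) :
    ∀ n : ℤ, ∀ α ∈ etaCocycles f (koszulD d g) (koszulGrading G) n,
      ∃ β ∈ etaDeg f (koszulD d g) (koszulGrading G) (n - 1),
        locDiff f (koszulD d g) β = α := by
  intro n α hα
  obtain ⟨⟨hmem, _⟩, hker⟩ := hα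
  obtain ⟨ξ, hξ, hξα⟩ := hmem
  replace hker : locDiff f (koszulD d g) α = 0 := hker
  -- unpack: α = (fUnit f)^n • mk ξ 1
  simp only [LinearMap.coe_comp, Function.comp_apply, LocalizedModule.mkLinearMap_apply,
    fzpow, LinearMap.coe_mk, AddHom.coe_mk] at hξα
  -- the differential of ξ vanishes
  have hDξ : koszulD d g ξ = 0 := by
    have htfN : ∀ x : Finset (Fin m) → M, f • x = 0 → x = 0 := fun x hx => by
      funext S
      exact htf (x S) (congrFun hx S)
    refine mk_eq_zero_tf f htfN _ ?_
    have h1 : ((fUnit f ^ n : (Localization (Submonoid.powers f))ˣ) :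
        Localization (Submonoid.powers f)) •
        LocalizedModule.mk (koszulD d g ξ) (1 : Submonoid.powers f) = 0 := by
      rw [← locDiff_mk f (koszulD d g) ξ 1, ← locDiff_loc_smul, hξα, hker]
    have h2 := congrArg (fun x => ((fUnit f ^ n)⁻¹ :
        (Localization (Submonoid.powers f))ˣ) • x) h1
    simpa [Units.smul_def, smul_smul, Units.inv_mul, one_smul] using h2
  obtain ⟨i₀, h, hfh⟩ := hsome
  set ζ := homot h i₀ ξ with hζ
  have hDζ : koszulD d g ζ = f • ξ := by
    have := homot_spec d g h i₀ ξ
    rw [hDξ, homot_zero, add_zero, ← hfh] at this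
    exact this
  -- β := f^{n-1} • mk ζ
  refine ⟨((fUnit f ^ (n - 1) : (Localization (Submonoid.powers f))ˣ) :
      Localization (Submonoid.powers f)) • LocalizedModule.mk ζ (1 : Submonoid.powers f),
    ⟨?_, ?_⟩, ?_⟩
  · exact ⟨ζ, homot_grading G n h i₀ ξ hξ, by
      simp only [LinearMap.coe_comp, Function.comp_apply, LocalizedModule.mkLinearMap_apply,
        fzpow, LinearMap.coe_mk, AddHom.coe_mk]⟩
  · refine Submodule.mem_comap.mpr ?_
    have hloc : locDiff f (koszulD d g)
        (((fUnit f ^ (n - 1) : (Localization (Submonoid.powers f))ˣ) :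
          Localization (Submonoid.powers f)) •
          LocalizedModule.mk ζ (1 : Submonoid.powers f)) = α := by
      rw [locDiff_loc_smul, locDiff_mk, hDζ]
      have hmkf : LocalizedModule.mk (f • ξ) (1 : Submonoid.powers f) =
          ((fUnit f : (Localization (Submonoid.powers f))ˣ) :
            Localization (Submonoid.powers f)) •
            LocalizedModule.mk ξ (1 : Submonoid.powers f) := by
        have : ((fUnit f : (Localization (Submonoid.powers f))ˣ) :
            Localization (Submonoid.powers f)) =
            algebraMap A (Localization (Submonoid.powers f)) f := IsUnit.unit_spec _
        rw [this, algebraMap_smul, LocalizedModule.smul'_mk]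
      rw [hmkf, smul_smul, ← Units.val_mul, ← zpow_add_one, sub_add_cancel, hξα]
    rw [hloc, sub_add_cancel]
    exact ⟨ξ, hξ, hξα⟩
  · rw [locDiff_loc_smul, locDiff_mk, hDζ]
    have hmkf : LocalizedModule.mk (f • ξ) (1 : Submonoid.powers f) =
        ((fUnit f : (Localization (Submonoid.powers f))ˣ) :
          Localization (Submonoid.powers f)) •
          LocalizedModule.mk ξ (1 : Submonoid.powers f) := by
      have : ((fUnit f : (Localization (Submonoid.powers f))ˣ) :
          Localization (Submonoid.powers f)) =
          algebraMap A (Localization (Submonoid.powers f)) f := IsUnit.unit_spec _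
      rw [this, algebraMap_smul, LocalizedModule.smul'_mk]
    rw [hmkf, smul_smul, ← Units.val_mul, ← zpow_add_one, sub_add_cancel, hξα]
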